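/- arXiv:2410.07698 — 2 statements merged into one kernel-verified Lean document; each statement's English description precedes it below -/
import Mathlib

section
/- Let G : ℝ^{m×r} → ℝ be differentiable with L̃-Lipschitz gradient in the Frobenius norm, let ε > 0, let B ∈ ℝ^{m×r}, and let U ∈ ℝ^{m×r} be a random matrix whose entries are i.i.d. standard normal. Define ∇̂G(B) := ((G(B + εU) − G(B − εU)) / (2ε)) · U. Then E_U ‖∇̂G(B)‖_F² ≤ 6 m r ‖∇G(B)‖_F² + 64 L̃² m³ r³ ε². -/
/-! Write `q(U) = (G(B + εU) - G(B - εU)) / (2ε)` and `g = ∇G(B)`. The descent inequality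
`|G(B + H) - G(B) - ⟨g, H⟩_F| ≤ L̃ ‖H‖_F²` at `H = ±εU` gives `|q(U) - ⟨g, U⟩_F| ≤ L̃ ε ‖U‖_F²`,
hence `‖q(U) U‖_F² ≤ 2 ⟨g, U⟩_F² ‖U‖_F² + 2 L̃² ε² ‖U‖_F⁶`. With `n = m r`, the Gaussian moments
`E[U_ij²] = 1`, `E[U_ij⁴] = 3` (odd moments vanish) give `E[⟨g, U⟩_F² ‖U‖_F²] = (n + 2) ‖g‖_F²`,
and the power-mean inequality `‖U‖_F⁶ ≤ n² ∑ U_ij⁶` with `E[U_ij⁶] = 15` bounds the second term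
by `30 L̃² ε² n³`. -/

open MeasureTheory ProbabilityTheory Matrix
open scoped BigOperators

noncomputable section

attribute [local instance] Matrix.frobeniusNormedAddCommGroup Matrix.frobeniusNormedSpace

instance (m n : ℕ) : MeasurableSpace (Matrix (Fin m) (Fin n) ℝ) := MeasurableSpace.pi

/-- Frobenius inner product `⟨A,B⟩_F = tr(A Bᵀ)`. -/
def finner {m n : ℕ} (A B : Matrix (Fin m) (Fin n) ℝ) : ℝ := (A * Bᵀ).trace

/-- `H ↦ ⟨G,H⟩_F` as a linear map. -/
def finnerLM {m n : ℕ} (G : Matrix (Fin m) (Fin n) ℝ) :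
    Matrix (Fin m) (Fin n) ℝ →ₗ[ℝ] ℝ where
  toFun H := finner G H
  map_add' A B := by simp [finner, Matrix.transpose_add, Matrix.mul_add]
  map_smul' c A := by simp [finner, Matrix.transpose_smul, Matrix.mul_smul]

/-- `H ↦ ⟨G,H⟩_F` as a continuous linear map; `HasFDerivAt F (finnerCLM G) X` says that
`G` is the gradient of `F` at `X` with respect to the Frobenius inner product. -/
def finnerCLM {m n : ℕ} (G : Matrix (Fin m) (Fin n) ℝ) :
    Matrix (Fin m) (Fin n) ℝ →L[ℝ] ℝ :=
  LinearMap.toContinuousLinearMap (finnerLM G)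

/-- Law of an `m × r` random matrix with i.i.d. standard normal entries. -/
def gaussMat (m r : ℕ) : Measure (Matrix (Fin m) (Fin r) ℝ) :=
  Measure.pi fun _ : Fin m => Measure.pi fun _ : Fin r => gaussianReal 0 1

open Real
open scoped NNReal

lemma integrable_pow_mul_exp_neg_half_sq (k : ℕ) :
    Integrable fun x : ℝ => x ^ k * exp (-2⁻¹ * x ^ 2) := by
  simpa using integrable_rpow_mul_exp_neg_mul_sq (b := 2⁻¹) (s := k) (by norm_num)
    (by linarith [k.cast_nonneg (α := ℝ)])

lemma integral_pow_add_two_mul_exp_neg_half_sq (k : ℕ) :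
    ∫ x : ℝ, x ^ (k + 2) * exp (-2⁻¹ * x ^ 2) =
      (k + 1) * ∫ x : ℝ, x ^ k * exp (-2⁻¹ * x ^ 2) := by
  have hderiv (x : ℝ) : HasDerivAt (fun x => x ^ (k + 1) * exp (-2⁻¹ * x ^ 2))
      ((k + 1) * (x ^ k * exp (-2⁻¹ * x ^ 2)) - x ^ (k + 2) * exp (-2⁻¹ * x ^ 2)) x := by
    refine ((hasDerivAt_pow (k + 1) x).fun_mul
      ((hasDerivAt_pow 2 x).const_mul (-2⁻¹ : ℝ)).exp).congr_deriv ?_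
    simp only [Nat.add_sub_cancel]
    push_cast
    ring
  have hint_k := (integrable_pow_mul_exp_neg_half_sq k).const_mul (k + 1 : ℝ)
  have hint_k2 := integrable_pow_mul_exp_neg_half_sq (k + 2)
  have hzero := integral_eq_zero_of_hasDerivAt_of_integrable hderiv (hint_k.sub hint_k2)
    (integrable_pow_mul_exp_neg_half_sq (k + 1))
  rw [integral_sub hint_k hint_k2, integral_const_mul] at hzero
  linarith

namespace ProbabilityTheory

lemma integrable_pow_gaussianReal (μ : ℝ) (v : ℝ≥0) (k : ℕ) :
    Integrable (fun x : ℝ => x ^ k) (gaussianReal μ v) :=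
  ((memLp_id_gaussianReal' k (by simp)).integrable_norm_pow').mono' (by fun_prop)
    (ae_of_all _ fun x => by simp [norm_pow])

lemma gaussianPDFReal_zero_one_apply (x : ℝ) :
    gaussianPDFReal 0 1 x = (√(2 * π))⁻¹ * exp (-2⁻¹ * x ^ 2) := by
  simp only [gaussianPDFReal, NNReal.coe_one, mul_one, sub_zero]
  congr 2
  ring

lemma integral_pow_gaussianReal_zero_one (k : ℕ) :
    ∫ x, x ^ k ∂gaussianReal 0 1 = (√(2 * π))⁻¹ * ∫ x : ℝ, x ^ k * exp (-2⁻¹ * x ^ 2) := by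
  rw [integral_gaussianReal_eq_integral_smul one_ne_zero, ← integral_const_mul]
  simp only [gaussianPDFReal_zero_one_apply, smul_eq_mul]
  congr 1 with x
  ring

lemma integral_pow_add_two_gaussianReal (k : ℕ) :
    ∫ x, x ^ (k + 2) ∂gaussianReal 0 1 = (k + 1) * ∫ x, x ^ k ∂gaussianReal 0 1 := by
  rw [integral_pow_gaussianReal_zero_one, integral_pow_gaussianReal_zero_one,
    integral_pow_add_two_mul_exp_neg_half_sq]
  ring

lemma integral_pow_gaussianReal_of_odd {k : ℕ} (hk : Odd k) :
    ∫ x, x ^ k ∂gaussianReal 0 1 = 0 := by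
  obtain ⟨j, rfl⟩ := hk
  induction j with
  | zero => simp [integral_id_gaussianReal]
  | succ j ih => rw [show 2 * (j + 1) + 1 = 2 * j + 1 + 2 by ring,
      integral_pow_add_two_gaussianReal, ih, mul_zero]

lemma integral_pow_two_gaussianReal : ∫ x, x ^ 2 ∂gaussianReal 0 1 = 1 := by
  simpa using integral_pow_add_two_gaussianReal 0

lemma integral_pow_four_gaussianReal : ∫ x, x ^ 4 ∂gaussianReal 0 1 = 3 := by
  rw [integral_pow_add_two_gaussianReal 2, integral_pow_two_gaussianReal]
  norm_num

lemma integral_pow_six_gaussianReal : ∫ x, x ^ 6 ∂gaussianReal 0 1 = 15 := by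
  rw [integral_pow_add_two_gaussianReal 4, integral_pow_four_gaussianReal]
  norm_num

end ProbabilityTheory

section CentralDifference

variable {E F : Type*} [NormedAddCommGroup E] [NormedSpace ℝ E]

/- The Lipschitz condition on `f'` is stated through its values: for `f' = finnerCLM ∘ gradG` the
operator norm is unavailable, since `finnerCLM` is typed with the product topology on matrices
rather than the Frobenius one. -/

lemma norm_image_add_sub_sub_fderiv_le [NormedAddCommGroup F] [NormedSpace ℝ F]
    {f : E → F} {f' : E → E →L[ℝ] F} {L : ℝ}
    (hf : ∀ x, HasFDerivAt f (f' x) x) (hL : ∀ x y h, ‖f' x h - f' y h‖ ≤ L * ‖x - y‖ * ‖h‖)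
    (x h : E) :
    ‖f (x + h) - f x - f' x h‖ ≤ L * ‖h‖ ^ 2 := by
  rcases eq_or_ne h 0 with rfl | hh
  · simp
  have hL₀ : 0 ≤ L := by
    have := (norm_nonneg _).trans (hL (x + h) x h)
    rw [add_sub_cancel_left, mul_assoc] at this
    exact nonneg_of_mul_nonneg_left this (by positivity)
  have hmem : x + h ∈ Metric.closedBall x ‖h‖ := by simp
  have hbound (z : E) (hz : z ∈ Metric.closedBall x ‖h‖) : ‖f' z - f' x‖ ≤ L * ‖h‖ :=
    ContinuousLinearMap.opNorm_le_bound _ (by positivity) fun v => (hL z x v).trans (by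
      gcongr
      exact mem_closedBall_iff_norm.1 hz)
  have := (convex_closedBall x ‖h‖).norm_image_sub_le_of_norm_hasFDerivWithin_le'
    (fun z _ => (hf z).hasFDerivWithinAt) hbound (Metric.mem_closedBall_self (norm_nonneg h)) hmem
  rw [add_sub_cancel_left] at this
  linarith

lemma abs_centralDiff_sub_fderiv_le {f : E → ℝ} {f' : E → E →L[ℝ] ℝ} {L : ℝ}
    (hf : ∀ x, HasFDerivAt f (f' x) x) (hL : ∀ x y h, ‖f' x h - f' y h‖ ≤ L * ‖x - y‖ * ‖h‖)
    (x u : E)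
    {ε : ℝ} (hε : 0 < ε) :
    |(f (x + ε • u) - f (x - ε • u)) / (2 * ε) - f' x u| ≤ L * ε * ‖u‖ ^ 2 := by
  have hplus := norm_image_add_sub_sub_fderiv_le hf hL x (ε • u)
  have hminus := norm_image_add_sub_sub_fderiv_le hf hL x (-(ε • u))
  rw [← sub_eq_add_neg, norm_neg] at hminus
  rw [norm_smul, Real.norm_of_nonneg hε.le, Real.norm_eq_abs] at hplus hminus
  rw [map_neg, map_smul, smul_eq_mul] at hminus
  rw [map_smul, smul_eq_mul] at hplus
  have hsplit : (f (x + ε • u) - f (x - ε • u)) / (2 * ε) - f' x u =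
      ((f (x + ε • u) - f x - ε * f' x u) - (f (x - ε • u) - f x - -(ε * f' x u))) / (2 * ε) := by
    field_simp
    ring
  rw [hsplit, abs_div, abs_of_pos (by positivity : 0 < 2 * ε), div_le_iff₀ (by positivity)]
  calc _ ≤ _ := abs_sub _ _
    _ ≤ L * (ε * ‖u‖) ^ 2 + L * (ε * ‖u‖) ^ 2 := add_le_add hplus hminus
    _ = L * ε * ‖u‖ ^ 2 * (2 * ε) := by ring

lemma norm_centralDiff_smul_sq_le {f : E → ℝ} {f' : E → E →L[ℝ] ℝ} {L : ℝ}
    (hf : ∀ x, HasFDerivAt f (f' x) x) (hL : ∀ x y h, ‖f' x h - f' y h‖ ≤ L * ‖x - y‖ * ‖h‖)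
    (x u : E)
    {ε : ℝ} (hε : 0 < ε) :
    ‖((f (x + ε • u) - f (x - ε • u)) / (2 * ε)) • u‖ ^ 2 ≤
      2 * (f' x u ^ 2 * ‖u‖ ^ 2) + 2 * L ^ 2 * ε ^ 2 * ‖u‖ ^ 6 := by
  set q := (f (x + ε • u) - f (x - ε • u)) / (2 * ε)
  have hdev : (q - f' x u) ^ 2 ≤ (L * ε * ‖u‖ ^ 2) ^ 2 := by
    rw [← sq_abs]
    exact pow_le_pow_left₀ (abs_nonneg _) (abs_centralDiff_sub_fderiv_le hf hL x u hε) 2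
  have hq : q ^ 2 ≤ 2 * (f' x u ^ 2 + (L * ε * ‖u‖ ^ 2) ^ 2) := by
    have := add_sq_le (a := f' x u) (b := q - f' x u)
    rw [add_sub_cancel] at this
    linarith
  rw [norm_smul, mul_pow, Real.norm_eq_abs, sq_abs]
  nlinarith [mul_le_mul_of_nonneg_right hq (sq_nonneg ‖u‖)]

end CentralDifference

lemma prod_pow_piSingle {ι M : Type*} [Fintype ι] [DecidableEq ι] [CommMonoid M]
    (x : ι → M) (i : ι) (k : ℕ) :
    ∏ a, x a ^ Pi.single (M := fun _ => ℕ) i k a = x i ^ k := by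
  rw [Fintype.prod_eq_single i fun a ha => by simp [ha]]
  simp

section Frobenius

variable {m r : ℕ}

lemma finner_eq_sum (A H : Matrix (Fin m) (Fin r) ℝ) :
    finner A H = ∑ p : Fin m × Fin r, A p.1 p.2 * H p.1 p.2 := by
  simp [finner, Matrix.trace, Matrix.mul_apply, Fintype.sum_prod_type]

lemma frobenius_norm_sq_eq_sum (A : Matrix (Fin m) (Fin r) ℝ) :
    ‖A‖ ^ 2 = ∑ p : Fin m × Fin r, A p.1 p.2 ^ 2 := by
  rw [Matrix.frobenius_norm_def, Fintype.sum_prod_type, ← Real.sqrt_eq_rpow,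
    Real.sq_sqrt (by positivity)]
  simp

lemma abs_finner_le (A H : Matrix (Fin m) (Fin r) ℝ) : |finner A H| ≤ ‖A‖ * ‖H‖ := by
  refine abs_le_of_sq_le_sq ?_ (by positivity)
  rw [finner_eq_sum, mul_pow, frobenius_norm_sq_eq_sum, frobenius_norm_sq_eq_sum]
  exact Finset.sum_mul_sq_le_sq_mul_sq _ _ _

lemma abs_finner_sub_finner_le (A B H : Matrix (Fin m) (Fin r) ℝ) :
    |finner A H - finner B H| ≤ ‖A - B‖ * ‖H‖ := by
  have hsub : finner A H - finner B H = finner (A - B) H := by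
    simp [finner, Matrix.sub_mul, Matrix.trace_sub]
  exact hsub ▸ abs_finner_le (A - B) H

lemma frobenius_norm_pow_six_le (U : Matrix (Fin m) (Fin r) ℝ) :
    ‖U‖ ^ 6 ≤ ((m : ℝ) * r) ^ 2 * ∑ p : Fin m × Fin r, U p.1 p.2 ^ 6 := by
  have hpm := pow_sum_le_card_mul_sum_pow (s := Finset.univ)
    (f := fun p : Fin m × Fin r => U p.1 p.2 ^ 2) (fun p _ => sq_nonneg _) 2
  simp only [Finset.card_univ, Fintype.card_prod, Fintype.card_fin, Nat.cast_mul,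
    ← pow_mul] at hpm
  rwa [show ‖U‖ ^ 6 = (‖U‖ ^ 2) ^ 3 by ring, frobenius_norm_sq_eq_sum]

lemma finner_sq_mul_sq_eq_sum (g U : Matrix (Fin m) (Fin r) ℝ) (c : Fin m × Fin r) :
    finner g U ^ 2 * U c.1 c.2 ^ 2 = ∑ p : Fin m × Fin r, ∑ q : Fin m × Fin r,
      g p.1 p.2 * g q.1 q.2 * (U p.1 p.2 * U q.1 q.2 * U c.1 c.2 ^ 2) := by
  rw [finner_eq_sum, sq, Finset.sum_mul_sum, Finset.sum_mul]
  refine Finset.sum_congr rfl fun p _ => ?_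
  rw [Finset.sum_mul]
  exact Finset.sum_congr rfl fun q _ => by ring

end Frobenius

section GaussianMatrix

variable {m r : ℕ}

lemma integrable_prod_pow_gaussMat (e : Fin m × Fin r → ℕ) :
    Integrable (fun U : Matrix (Fin m) (Fin r) ℝ => ∏ p, U p.1 p.2 ^ e p) (gaussMat m r) := by
  simp_rw [Fintype.prod_prod_type]
  exact .fintype_prod fun i => .fintype_prod fun j => integrable_pow_gaussianReal 0 1 (e (i, j))

lemma integral_prod_pow_gaussMat (e : Fin m × Fin r → ℕ) :
    ∫ U, ∏ p, U p.1 p.2 ^ e p ∂gaussMat m r = ∏ p, ∫ x, x ^ e p ∂gaussianReal 0 1 := by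
  simp_rw [Fintype.prod_prod_type]
  exact (integral_fintype_prod_eq_prod (fun i (x : Fin r → ℝ) => ∏ j, x j ^ e (i, j))).trans
    (Finset.prod_congr rfl fun i _ => integral_fintype_prod_eq_prod _)

lemma integrable_pow_gaussMat (p : Fin m × Fin r) (k : ℕ) :
    Integrable (fun U : Matrix (Fin m) (Fin r) ℝ => U p.1 p.2 ^ k) (gaussMat m r) := by
  simpa only [prod_pow_piSingle (fun a : Fin m × Fin r => _)] using
    integrable_prod_pow_gaussMat (m := m) (r := r) (Pi.single p k)

lemma integral_pow_gaussMat (p : Fin m × Fin r) (k : ℕ) :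
    ∫ U, U p.1 p.2 ^ k ∂gaussMat m r = ∫ x, x ^ k ∂gaussianReal 0 1 := by
  have := integral_prod_pow_gaussMat (m := m) (r := r) (Pi.single p k)
  simp only [prod_pow_piSingle (fun a : Fin m × Fin r => _)] at this
  rw [this, Fintype.prod_eq_single p fun a ha => by simp [ha]]
  simp

lemma integrable_sum_pow_six_gaussMat :
    Integrable (fun U : Matrix (Fin m) (Fin r) ℝ => ∑ p : Fin m × Fin r, U p.1 p.2 ^ 6)
      (gaussMat m r) :=
  integrable_finsetSum _ fun p _ => integrable_pow_gaussMat p 6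

lemma integral_sum_pow_six_gaussMat :
    ∫ U, ∑ p : Fin m × Fin r, U p.1 p.2 ^ 6 ∂gaussMat m r = 15 * (m * r) := by
  rw [integral_finsetSum _ fun p _ => integrable_pow_gaussMat p 6]
  simp only [integral_pow_gaussMat, integral_pow_six_gaussianReal, Finset.sum_const,
    Finset.card_univ, Fintype.card_prod, Fintype.card_fin, nsmul_eq_mul, Nat.cast_mul]
  ring

lemma mul_mul_sq_eq_prod_pow (U : Matrix (Fin m) (Fin r) ℝ) (p q c : Fin m × Fin r) :
    U p.1 p.2 * U q.1 q.2 * U c.1 c.2 ^ 2 =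
      ∏ a : Fin m × Fin r,
        U a.1 a.2 ^ (Pi.single p 1 + Pi.single q 1 + Pi.single c 2 : _ → ℕ) a := by
  simp only [Pi.add_apply, pow_add, Finset.prod_mul_distrib,
    prod_pow_piSingle (fun a : Fin m × Fin r => U a.1 a.2), pow_one]

lemma integrable_mul_mul_sq_gaussMat (p q c : Fin m × Fin r) :
    Integrable (fun U : Matrix (Fin m) (Fin r) ℝ => U p.1 p.2 * U q.1 q.2 * U c.1 c.2 ^ 2)
      (gaussMat m r) := by
  simp_rw [mul_mul_sq_eq_prod_pow]
  exact integrable_prod_pow_gaussMat _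

lemma integral_mul_mul_sq_gaussMat (p q c : Fin m × Fin r) :
    ∫ U, U p.1 p.2 * U q.1 q.2 * U c.1 c.2 ^ 2 ∂gaussMat m r =
      if p = q then (if c = p then 3 else 1) else 0 := by
  simp_rw [mul_mul_sq_eq_prod_pow, integral_prod_pow_gaussMat]
  by_cases hpq : p = q
  · subst hpq
    by_cases hcp : c = p
    · subst hcp
      rw [Fintype.prod_eq_single c fun a ha => by simp [ha]]
      simp [integral_pow_four_gaussianReal]
    · rw [if_pos rfl, if_neg hcp,
        Finset.prod_eq_mul p c (Ne.symm hcp) (fun a _ ha => by simp [ha])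
          (by simp) (by simp)]
      simp [hcp, Ne.symm hcp, integral_pow_two_gaussianReal]
  · rw [if_neg hpq]
    refine Finset.prod_eq_zero (Finset.mem_univ p) (integral_pow_gaussianReal_of_odd ?_)
    rcases eq_or_ne c p with rfl | hcp <;> simp [Nat.odd_iff, *]

lemma integrable_finner_sq_mul_sq_gaussMat (g : Matrix (Fin m) (Fin r) ℝ) (c : Fin m × Fin r) :
    Integrable (fun U => finner g U ^ 2 * U c.1 c.2 ^ 2) (gaussMat m r) := by
  simp_rw [finner_sq_mul_sq_eq_sum]
  exact integrable_finsetSum _ fun p _ => integrable_finsetSum _ fun q _ =>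
    (integrable_mul_mul_sq_gaussMat p q c).const_mul _

lemma integral_finner_sq_mul_sq_gaussMat (g : Matrix (Fin m) (Fin r) ℝ) (c : Fin m × Fin r) :
    ∫ U, finner g U ^ 2 * U c.1 c.2 ^ 2 ∂gaussMat m r = ‖g‖ ^ 2 + 2 * g c.1 c.2 ^ 2 := by
  simp_rw [finner_sq_mul_sq_eq_sum]
  rw [integral_finsetSum _ fun p _ => integrable_finsetSum _ fun q _ =>
    (integrable_mul_mul_sq_gaussMat p q c).const_mul _]
  simp_rw [integral_finsetSum _ fun q _ => (integrable_mul_mul_sq_gaussMat _ q c).const_mul _,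
    integral_const_mul, integral_mul_mul_sq_gaussMat]
  have hcoef (p : Fin m × Fin r) :
      (if c = p then g p.1 p.2 * g p.1 p.2 * 3 else g p.1 p.2 * g p.1 p.2 * 1) =
        g p.1 p.2 ^ 2 + 2 * (if c = p then g p.1 p.2 ^ 2 else 0) := by
    split_ifs <;> ring
  simp only [mul_ite, mul_zero, Finset.sum_ite_eq, Finset.mem_univ, if_true]
  simp_rw [hcoef, Finset.sum_add_distrib, ← Finset.mul_sum, Finset.sum_ite_eq, Finset.mem_univ,
    if_true, frobenius_norm_sq_eq_sum]

lemma integrable_finner_sq_mul_norm_sq_gaussMat (g : Matrix (Fin m) (Fin r) ℝ) :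
    Integrable (fun U => finner g U ^ 2 * ‖U‖ ^ 2) (gaussMat m r) := by
  simp_rw [frobenius_norm_sq_eq_sum, Finset.mul_sum]
  exact integrable_finsetSum _ fun c _ => integrable_finner_sq_mul_sq_gaussMat g c

lemma integral_finner_sq_mul_norm_sq_gaussMat (g : Matrix (Fin m) (Fin r) ℝ) :
    ∫ U, finner g U ^ 2 * ‖U‖ ^ 2 ∂gaussMat m r = (m * r + 2) * ‖g‖ ^ 2 := by
  simp_rw [frobenius_norm_sq_eq_sum (_ : Matrix (Fin m) (Fin r) ℝ), Finset.mul_sum]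
  rw [integral_finsetSum _ fun c _ => integrable_finner_sq_mul_sq_gaussMat g c]
  simp_rw [integral_finner_sq_mul_sq_gaussMat, Finset.sum_add_distrib, ← Finset.mul_sum,
    ← frobenius_norm_sq_eq_sum]
  simp only [Finset.sum_const, Finset.card_univ, Fintype.card_prod, Fintype.card_fin,
    nsmul_eq_mul, Nat.cast_mul]
  ring

end GaussianMatrix

lemma norm_centralDiff_smul_sq_le_sum_pow_six {m r : ℕ} {G : Matrix (Fin m) (Fin r) ℝ → ℝ}
    {gradG : Matrix (Fin m) (Fin r) ℝ → Matrix (Fin m) (Fin r) ℝ} {Lt : ℝ}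
    (hderiv : ∀ B, HasFDerivAt G (finnerCLM (gradG B)) B)
    (hlip : ∀ B₁ B₂, ‖gradG B₁ - gradG B₂‖ ≤ Lt * ‖B₁ - B₂‖)
    (B U : Matrix (Fin m) (Fin r) ℝ) {ε : ℝ} (hε : 0 < ε) :
    ‖((G (B + ε • U) - G (B - ε • U)) / (2 * ε)) • U‖ ^ 2 ≤
      2 * (finner (gradG B) U ^ 2 * ‖U‖ ^ 2) +
        2 * Lt ^ 2 * ε ^ 2 * ((m : ℝ) * r) ^ 2 * ∑ p : Fin m × Fin r, U p.1 p.2 ^ 6 := by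
  have hL (B₁ B₂ H : Matrix (Fin m) (Fin r) ℝ) :
      ‖finnerCLM (gradG B₁) H - finnerCLM (gradG B₂) H‖ ≤ Lt * ‖B₁ - B₂‖ * ‖H‖ :=
    (abs_finner_sub_finner_le _ _ H).trans (by gcongr; exact hlip B₁ B₂)
  refine (norm_centralDiff_smul_sq_le hderiv hL B U hε).trans ?_
  have := mul_le_mul_of_nonneg_left (frobenius_norm_pow_six_le U)
    (by positivity : 0 ≤ 2 * Lt ^ 2 * ε ^ 2)
  change 2 * (finner (gradG B) U ^ 2 * ‖U‖ ^ 2) + _ ≤ _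
  linarith

/-- second moment bound for the randomized finite-difference estimator:
`E_U‖∇̂G(B)‖_F² ≤ 6mr‖∇G(B)‖_F² + 64L̃²m³r³ε²`. -/
theorem stmt_7 {m r : ℕ} (hm : 0 < m) (hr : 0 < r)
    (G : Matrix (Fin m) (Fin r) ℝ → ℝ) (Lt : ℝ)
    (gradG : Matrix (Fin m) (Fin r) ℝ → Matrix (Fin m) (Fin r) ℝ)
    (hderiv : ∀ B, HasFDerivAt G (finnerCLM (gradG B)) B)
    (hlip : ∀ B₁ B₂, ‖gradG B₁ - gradG B₂‖ ≤ Lt * ‖B₁ - B₂‖)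
    (ε : ℝ) (hε : 0 < ε) (B : Matrix (Fin m) (Fin r) ℝ) :
    ∫ U, ‖((G (B + ε • U) - G (B - ε • U)) / (2 * ε)) • U‖ ^ 2 ∂gaussMat m r ≤
      6 * (m : ℝ) * (r : ℝ) * ‖gradG B‖ ^ 2 +
        64 * Lt ^ 2 * (m : ℝ) ^ 3 * (r : ℝ) ^ 3 * ε ^ 2 := by
  set n : ℝ := (m : ℝ) * r
  have hn : 1 ≤ n := one_le_mul_of_one_le_of_one_le (by exact_mod_cast hm) (by exact_mod_cast hr)
  have hint_main := (integrable_finner_sq_mul_norm_sq_gaussMat (gradG B)).const_mul 2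
  have hint_rem := (integrable_sum_pow_six_gaussMat (m := m) (r := r)).const_mul
    (2 * Lt ^ 2 * ε ^ 2 * n ^ 2)
  calc _ ≤ ∫ U, 2 * (finner (gradG B) U ^ 2 * ‖U‖ ^ 2) +
        2 * Lt ^ 2 * ε ^ 2 * n ^ 2 * ∑ p : Fin m × Fin r, U p.1 p.2 ^ 6 ∂gaussMat m r :=
        integral_mono_of_nonneg (ae_of_all _ fun U => by positivity) (hint_main.add hint_rem)
          (ae_of_all _ fun U => norm_centralDiff_smul_sq_le_sum_pow_six hderiv hlip B U hε)
    _ = 2 * ((n + 2) * ‖gradG B‖ ^ 2) + 2 * Lt ^ 2 * ε ^ 2 * n ^ 2 * (15 * n) := by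
        rw [integral_add hint_main hint_rem, integral_const_mul, integral_const_mul,
          integral_finner_sq_mul_norm_sq_gaussMat, integral_sum_pow_six_gaussMat]
    _ ≤ _ := by
        nlinarith [mul_le_mul_of_nonneg_right hn (sq_nonneg ‖gradG B‖),
          mul_nonneg (mul_nonneg (sq_nonneg Lt) (sq_nonneg ε))
            (pow_nonneg (zero_le_one.trans hn) 3)]
end
end

section
/- (Equivalence of LOZO and the zeroth-order subspace method.) Fix positive integers m, n, r, ν, reals ε > 0 and α > 0, functions F_t : ℝ^{m×n} → ℝ for t = 0, 1, 2, …, matrices U^t ∈ ℝ^{m×r} for t ≥ 0 and V^{(k)} ∈ ℝ^{n×r} for k ≥ 0. Define the LOZO iterates by X^{t+1} = X^t − α · c^t · U^t (V^{(k)})ᵀ / r for t = kν + s with 0 ≤ s ≤ ν−1, where c^t := (F_t(X^t + ε U^t (V^{(k)})ᵀ) − F_t(X^t − ε U^t (V^{(k)})ᵀ)) / (2ε). Define the subspace iterates by X̃^{(0)} := X^0, and for each k: B^{(k,0)} := 0 ∈ ℝ^{m×r}, B^{(k,s+1)} := B^{(k,s)} − (α/r) · c̃^{(k,s)} · U^{kν+s}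 for 0 ≤ s ≤ ν−1, where c̃^{(k,s)} := (F_{kν+s}(X̃^{(k)} + (B^{(k,s)} + ε U^{kν+s})(V^{(k)})ᵀ) − F_{kν+s}(X̃^{(k)} + (B^{(k,s)} − ε U^{kν+s})(V^{(k)})ᵀ)) / (2ε), and X̃^{(k+1)} := X̃^{(k)} + B^{(k,ν)} (V^{(k)})ᵀ. Then for all k ≥ 0 and all 0 ≤ s ≤ ν, X^{kν+s} = X̃^{(k)} + B^{(k,s)} (V^{(k)})ᵀ; in particular X^{kν} = X̃^{(k)} for all k. -/
open MeasureTheory ProbabilityTheory Matrix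
open scoped BigOperators

noncomputable section

attribute [local instance] Matrix.frobeniusNormedAddCommGroup Matrix.frobeniusNormedSpace

private lemma step_eq {m n r : ℕ} (Xt : Matrix (Fin m) (Fin n) ℝ)
    (Bm Um : Matrix (Fin m) (Fin r) ℝ) (Vt : Matrix (Fin r) (Fin n) ℝ) (α c r' : ℝ) :
    Xt + Bm * Vt - (α * c / r') • (Um * Vt) = Xt + (Bm - (α / r' * c) • Um) * Vt := by
  rw [Matrix.sub_mul, Matrix.smul_mul, div_mul_eq_mul_div]
  abel

set_option maxHeartbeats 1000000 in
/-- equivalence of LOZO and the zeroth-order subspace method: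
if `X` follows the LOZO recursion and `(Xt, B)` follow the subspace recursion
(with the same perturbations `U^t`, subspace matrices `V^{(k)}` and losses `F_t`),
then `X^{kν+s} = X̃^{(k)} + B^{(k,s)} (V^{(k)})ᵀ` for all `k` and `0 ≤ s ≤ ν`;
in particular `X^{kν} = X̃^{(k)}`. -/
theorem stmt_13 {m n r : ℕ} (hm : 0 < m) (hn : 0 < n) (hr : 0 < r)
    (ν : ℕ) (hν : 0 < ν) (ε α : ℝ) (hε : 0 < ε) (hα : 0 < α)
    (F : ℕ → Matrix (Fin m) (Fin n) ℝ → ℝ)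
    (U : ℕ → Matrix (Fin m) (Fin r) ℝ)
    (V : ℕ → Matrix (Fin n) (Fin r) ℝ)
    (X : ℕ → Matrix (Fin m) (Fin n) ℝ)
    -- LOZO recursion: for t = kν + s with 0 ≤ s ≤ ν−1,
    -- X^{t+1} = X^t − α · c^t · U^t (V^{(k)})ᵀ / r
    (hX : ∀ k s, s < ν →
      X (k * ν + s + 1) = X (k * ν + s) -
        ((α * ((F (k * ν + s) (X (k * ν + s) + ε • (U (k * ν + s) * (V k)ᵀ)) -
            F (k * ν + s) (X (k * ν + s) - ε • (U (k * ν + s) * (V k)ᵀ))) / (2 * ε))) / r) •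
          (U (k * ν + s) * (V k)ᵀ))
    (Xt : ℕ → Matrix (Fin m) (Fin n) ℝ)
    (B : ℕ → ℕ → Matrix (Fin m) (Fin r) ℝ)
    (hXt0 : Xt 0 = X 0)
    (hB0 : ∀ k, B k 0 = 0)
    -- subspace recursion: B^{(k,s+1)} = B^{(k,s)} − (α/r) · c̃^{(k,s)} · U^{kν+s}
    (hB : ∀ k s, s < ν →
      B k (s + 1) = B k s -
        ((α / r) * ((F (k * ν + s) (Xt k + (B k s + ε • U (k * ν + s)) * (V k)ᵀ) -
            F (k * ν + s) (Xt k + (B k s - ε • U (k * ν + s)) * (V k)ᵀ)) / (2 * ε))) •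
          U (k * ν + s))
    (hXt : ∀ k, Xt (k + 1) = Xt k + B k ν * (V k)ᵀ) :
    (∀ k s, s ≤ ν → X (k * ν + s) = Xt k + B k s * (V k)ᵀ) ∧
      ∀ k, X (k * ν) = Xt k := by

  have main : ∀ k, X (k * ν) = Xt k ∧ ∀ s, s ≤ ν → X (k * ν + s) = Xt k + B k s * (V k)ᵀ := by
    intro k
    induction k with
    | zero =>
      have base : X (0 * ν) = Xt 0 := by simp [hXt0]
      refine ⟨base, ?_⟩
      intro s hs
      induction s with
      | zero => simpa [hB0] using base
      | succ s ih =>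
        have hs' : s < ν := hs
        have ihs := ih (le_of_lt hs')
        have h1 := hX 0 s hs'
        have h2 := hB 0 s hs'
        have hF1 : X (0 * ν + s) + ε • (U (0 * ν + s) * (V 0)ᵀ)
            = Xt 0 + (B 0 s + ε • U (0 * ν + s)) * (V 0)ᵀ := by
          rw [ihs, Matrix.add_mul, Matrix.smul_mul]; abel
        have hF2 : X (0 * ν + s) - ε • (U (0 * ν + s) * (V 0)ᵀ)
            = Xt 0 + (B 0 s - ε • U (0 * ν + s)) * (V 0)ᵀ := by
          rw [ihs, Matrix.sub_mul, Matrix.smul_mul]; abel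
        rw [← add_assoc, h1, h2, hF1, hF2, ihs]
        exact step_eq _ _ _ _ _ _ _
    | succ k ih =>
      obtain ⟨_, ihs⟩ := ih
      have base : X ((k + 1) * ν) = Xt (k + 1) := by
        have := ihs ν le_rfl
        rw [hXt k, ← this]
        ring_nf
      refine ⟨base, ?_⟩
      intro s hs
      induction s with
      | zero => simpa [hB0] using base
      | succ s ih2 =>
        have hs' : s < ν := hs
        have ihs2 := ih2 (le_of_lt hs')
        have h1 := hX (k+1) s hs'
        have h2 := hB (k+1) s hs'
        have hF1 : X ((k+1) * ν + s) + ε • (U ((k+1) * ν + s) * (V (k+1))ᵀ)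
            = Xt (k+1) + (B (k+1) s + ε • U ((k+1) * ν + s)) * (V (k+1))ᵀ := by
          rw [ihs2, Matrix.add_mul, Matrix.smul_mul]; abel
        have hF2 : X ((k+1) * ν + s) - ε • (U ((k+1) * ν + s) * (V (k+1))ᵀ)
            = Xt (k+1) + (B (k+1) s - ε • U ((k+1) * ν + s)) * (V (k+1))ᵀ := by
          rw [ihs2, Matrix.sub_mul, Matrix.smul_mul]; abel
        rw [← add_assoc, h1, h2, hF1, hF2, ihs2]
        exact step_eq _ _ _ _ _ _ _
  exact ⟨fun k s hs => (main k).2 s hs, fun k => (main k).1⟩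
end
end
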